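/- arXiv:1701.08596 — 4 statements merged into one kernel-verified Lean document; each statement's English description precedes it below -/
import Mathlib

section
/- Let X be a metric space that is s-regular for some s > 0, and let 0 < t < s. If A ⊆ X is a t-regular set, then A is uniformly ρ-porous for some ρ > 0 (with ρ and r_p depending only on s, t and the regularity constants of X and A). -/
open Metric MeasureTheory Set

/-- `μ` is `s`-regular on `A` with constants `a ≤ b` and scale `r₀`. -/
def IsRegularOn {X : Type*} [MetricSpace X] [MeasurableSpace X] (μ : Measure X)
    (s : ℝ) (A : Set X) (a b r₀ : ℝ) : Prop :=
  ∀ x ∈ A, ∀ r : ℝ, 0 < r → r < r₀ →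
    ENNReal.ofReal (a * r ^ s) ≤ μ (closedBall x r) ∧
      μ (closedBall x r) ≤ ENNReal.ofReal (b * r ^ s)

/-!
If `A` is not porous at `x` at scale `r`, every point of `closedBall x (r / 2)` lies within
`u = ε r` of `A`. A maximal `u`-separated subset of `A ∩ closedBall x r` then has at most about
`(r / u) ^ t` points, because `t`-regularity of `ν` bounds the number of disjoint balls of radius
`u / 2` inside `closedBall x (2 r)`; but the balls of radius `2 u` around it cover
`closedBall x (r / 2)`, so `s`-regularity of `μ` forces at least about `(r / u) ^ s` points.
Hence `ε ^ (s - t)` is bounded below in terms of the regularity constants alone, which fails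
for small `ε`.
-/

open scoped NNReal ENNReal

namespace Metric

lemma IsCover.trans {X : Type*} [PseudoEMetricSpace X] {ε δ : ℝ≥0} {s N M : Set X}
    (hN : IsCover ε s N) (hM : IsCover δ N M) : IsCover (ε + δ) s M := by
  intro x hx
  obtain ⟨y, hyN, hxy⟩ := hN hx
  obtain ⟨z, hzM, hyz⟩ := hM hyN
  refine ⟨z, hzM, ?_⟩
  calc edist x z ≤ edist x y + edist y z := edist_triangle x y z
    _ ≤ ε + δ := add_le_add hxy hyz

section PseudoMetricSpace

variable {X : Type*} [PseudoMetricSpace X]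

lemma IsCover.inter_closedBall {ε : ℝ≥0} {s N : Set X} {x : X} {r : ℝ} (hN : IsCover ε s N)
    (hs : s ⊆ closedBall x r) : IsCover ε s (N ∩ closedBall x (r + ε)) := by
  rw [isCover_iff_subset_iUnion_closedBall] at hN ⊢
  intro z hz
  obtain ⟨y, hyN, hzy⟩ := mem_iUnion₂.1 (hN hz)
  refine mem_iUnion₂.2 ⟨y, ⟨hyN, ?_⟩, hzy⟩
  rw [mem_closedBall] at hzy ⊢
  have := mem_closedBall.1 (hs hz)
  linarith [dist_triangle y z x, dist_comm y z]

lemma closedBall_subset_closedBall_diff_of_notMem {A : Set X} {x y : X} {δ r : ℝ}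
    (h : δ + dist y x ≤ r) (hy : y ∉ ⋃ a ∈ A, closedBall a δ) :
    closedBall y δ ⊆ closedBall x r \ A := by
  refine fun z hz => ⟨closedBall_subset_closedBall' h hz, fun hzA => hy ?_⟩
  exact mem_iUnion₂.2 ⟨z, hzA, mem_closedBall_comm.1 hz⟩

variable [MeasurableSpace X]

lemma IsCover.measure_le_encard_mul (μ : Measure X) {ε : ℝ≥0} {s N : Set X} {m : ℝ≥0∞}
    (hsN : IsCover ε s N) (hN : N.Countable) (hm : ∀ y ∈ N, μ (closedBall y ε) ≤ m) :
    μ s ≤ N.encard * m :=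
  calc μ s ≤ μ (⋃ y ∈ N, closedBall y ε) := measure_mono hsN.subset_iUnion_closedBall
    _ ≤ ∑' y : N, μ (closedBall y ε) := measure_biUnion_le μ hN _
    _ ≤ ∑' _ : N, m := ENNReal.tsum_le_tsum fun y => hm y y.2
    _ = N.encard * m := ENNReal.tsum_set_const _ _

open Function in
lemma packingNumber_mul_le_measure [OpensMeasurableSpace X] (μ : Measure X) {δ : ℝ≥0}
    {T U : Set X} {m : ℝ≥0∞} (hU : ∀ y ∈ T, closedBall y (δ / 2) ⊆ U)
    (hm : ∀ y ∈ T, m ≤ μ (closedBall y (δ / 2))) : packingNumber δ T * m ≤ μ U := by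
  simp only [packingNumber, ENat.toENNReal_iSup, ENNReal.iSup_mul, iSup_le_iff]
  intro C hCT hC
  have hdisj : Pairwise (Disjoint on fun y : C => closedBall (y : X) (δ / 2)) := by
    intro y z hyz
    refine closedBall_disjoint_closedBall ?_
    have : (δ : ℝ≥0∞) < edist (y : X) z := hC y.2 z.2 (Subtype.coe_ne_coe.2 hyz)
    rw [edist_dist, ENNReal.coe_lt_ofReal] at this
    linarith
  calc C.encard * m = ∑' _ : C, m := (ENNReal.tsum_set_const _ _).symm
    _ ≤ ∑' y : C, μ (closedBall y (δ / 2)) := ENNReal.tsum_le_tsum fun y => hm y (hCT y.2)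
    _ ≤ μ (⋃ y : C, closedBall y (δ / 2)) :=
      tsum_meas_le_meas_iUnion_of_disjoint μ (fun _ => measurableSet_closedBall) hdisj
    _ ≤ μ U := measure_mono (iUnion_subset fun y => hU y (hCT y.2))

end PseudoMetricSpace

end Metric

section Regular

variable {X : Type*} [MetricSpace X] [MeasurableSpace X]

lemma IsRegularOn.packingNumber_mul_le [OpensMeasurableSpace X] {ν : Measure X}
    {t a b r₀ : ℝ} {A : Set X} (hν : IsRegularOn ν t A a b r₀) {x : X} (hx : x ∈ A) {δ : ℝ≥0}
    (hδ : 0 < δ) {r : ℝ} (hδr : (δ : ℝ) ≤ 2 * r) (hr : 2 * r < r₀) :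
    packingNumber δ (A ∩ closedBall x r) * ENNReal.ofReal (a * (δ / 2) ^ t) ≤
      ENNReal.ofReal (b * (2 * r) ^ t) := by
  have hδ' : (0 : ℝ) < δ := hδ
  refine (packingNumber_mul_le_measure ν (U := closedBall x (2 * r)) (fun y hy => ?_)
    (fun y hy => (hν y hy.1 _ (by positivity) (by linarith)).1)).trans
    (hν x hx _ (by linarith) hr).2
  exact closedBall_subset_closedBall' (by linarith [mem_closedBall.1 hy.2])

lemma IsRegularOn.mul_rpow_le_of_isCover [OpensMeasurableSpace X] {μ ν : Measure X}
    {s t aX bX rX aA bA rA : ℝ} {A : Set X} (hμ : IsRegularOn μ s univ aX bX rX)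
    (hν : IsRegularOn ν t A aA bA rA) (haX : 0 ≤ aX) (hbX : 0 ≤ bX) (haA : 0 < aA)
    (hbA : 0 ≤ bA) {x : X} (hx : x ∈ A) {u : ℝ≥0} (hu : 0 < u) {r : ℝ} (hur : 2 * u ≤ r)
    (hrX : r < rX) (hrA : 2 * r < rA) (hcover : IsCover u (closedBall x (r / 2)) A) :
    aX * (r / 2) ^ s * (aA * (u / 2) ^ t) ≤ bX * (2 * u) ^ s * (bA * (2 * r) ^ t) := by
  have hu' : (0 : ℝ) < u := hu
  have hr : 0 < r := by linarith
  set T := A ∩ closedBall x r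
  have hpack := hν.packingNumber_mul_le hx hu (by linarith) hrA
  have hfin : packingNumber u T ≠ ⊤ := by
    intro htop
    rw [htop, ENat.toENNReal_top,
      ENNReal.top_mul (ENNReal.ofReal_pos.2 (by positivity)).ne'] at hpack
    exact ENNReal.ofReal_ne_top (top_le_iff.1 hpack)
  have hS : IsCover (u + u) (closedBall x (r / 2)) (maximalSeparatedSet u T) :=
    ((hcover.inter_closedBall subset_rfl).mono
      (inter_subset_inter_right _ (closedBall_subset_closedBall (by linarith)))).trans
      (isCover_maximalSeparatedSet hfin)
  have hcount : ENNReal.ofReal (aX * (r / 2) ^ s) ≤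
      packingNumber u T * ENNReal.ofReal (bX * (2 * u) ^ s) := by
    rw [← encard_maximalSeparatedSet hfin]
    refine (hμ x trivial _ (by positivity) (by linarith)).1.trans
      (hS.measure_le_encard_mul μ ?_ fun y _ => ?_)
    · exact (Set.encard_ne_top_iff.1 (encard_maximalSeparatedSet hfin ▸ hfin)).countable
    · have := (hμ y trivial (2 * u) (by positivity) (by linarith)).2
      rwa [two_mul] at this ⊢
  have hmain : ENNReal.ofReal (aX * (r / 2) ^ s) * ENNReal.ofReal (aA * (u / 2) ^ t) ≤
      ENNReal.ofReal (bX * (2 * u) ^ s) * ENNReal.ofReal (bA * (2 * r) ^ t) :=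
    calc _ ≤ packingNumber u T * ENNReal.ofReal (bX * (2 * u) ^ s) *
          ENNReal.ofReal (aA * (u / 2) ^ t) := by gcongr
      _ = ENNReal.ofReal (bX * (2 * u) ^ s) *
          (packingNumber u T * ENNReal.ofReal (aA * (u / 2) ^ t)) := by ring
      _ ≤ _ := by gcongr
  rwa [← ENNReal.ofReal_mul (by positivity), ← ENNReal.ofReal_mul (by positivity),
    ENNReal.ofReal_le_ofReal_iff (by positivity)] at hmain

end Regular

/-- The conclusion of `IsRegularOn.mul_rpow_le_of_isCover` at `u = ε r`, with the powers of `r`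
cancelled. -/
lemma mul_le_four_rpow_mul_rpow_sub_of_le {s t a a' b b' ε r : ℝ} (hε : 0 < ε) (hr : 0 < r)
    (h : a * (r / 2) ^ s * (a' * (ε * r / 2) ^ t) ≤
      b * (2 * (ε * r)) ^ s * (b' * (2 * r) ^ t)) :
    a * a' ≤ 4 ^ (s + t) * (b * b') * ε ^ (s - t) := by
  have hk : 0 < ε ^ t * r ^ (s + t) / 2 ^ (s + t) := by positivity
  have hl : (r / 2) ^ s * (ε * r / 2) ^ t = ε ^ t * r ^ (s + t) / 2 ^ (s + t) := by
    rw [Real.div_rpow hr.le zero_le_two, Real.div_rpow (by positivity) zero_le_two,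
      Real.mul_rpow hε.le hr.le, Real.rpow_add hr, Real.rpow_add zero_lt_two]
    field_simp
  have hr' : (2 * (ε * r)) ^ s * (2 * r) ^ t =
      4 ^ (s + t) * ε ^ (s - t) * (ε ^ t * r ^ (s + t) / 2 ^ (s + t)) := by
    rw [Real.mul_rpow zero_le_two (by positivity), Real.mul_rpow zero_le_two hr.le,
      Real.mul_rpow hε.le hr.le, Real.rpow_add hr, Real.rpow_add zero_lt_two,
      show (4 : ℝ) = 2 * 2 by norm_num, Real.mul_rpow zero_le_two zero_le_two,
      Real.rpow_add zero_lt_two, Real.rpow_sub hε]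
    field_simp
  refine le_of_mul_le_mul_right ?_ hk
  calc a * a' * (ε ^ t * r ^ (s + t) / 2 ^ (s + t))
      = a * (r / 2) ^ s * (a' * (ε * r / 2) ^ t) := by rw [← hl]; ring
    _ ≤ b * (2 * (ε * r)) ^ s * (b' * (2 * r) ^ t) := h
    _ = _ := by rw [mul_mul_mul_comm, hr']; ring

open Filter Topology in
lemma exists_mem_Ioc_mul_rpow_lt (K : ℝ) {p c δ : ℝ} (hp : 0 < p) (hc : 0 < c) (hδ : 0 < δ) :
    ∃ ε ∈ Ioc 0 δ, K * ε ^ p < c := by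
  have hlim : Tendsto (fun ε : ℝ => K * ε ^ p) (𝓝[>] 0) (𝓝 0) := by
    simpa [Real.zero_rpow hp.ne'] using
      ((Real.continuousAt_rpow_const 0 p (Or.inr hp.le)).tendsto.const_mul K).mono_left
        nhdsWithin_le_nhds
  obtain ⟨ε, hεc, hεδ⟩ :=
    ((hlim.eventually (gt_mem_nhds hc)).and (Ioc_mem_nhdsGT hδ)).exists
  exact ⟨ε, hεδ, hεc⟩

theorem regular_set_is_porous_general (s t : ℝ) (hts : t < s)
    (aX bX rX aA bA rA : ℝ) (haX : 0 < aX) (habX : aX ≤ bX) (hrX : 0 < rX)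
    (haA : 0 < aA) (habA : aA ≤ bA) (hrA : 0 < rA) :
    ∃ ρ : ℝ, 0 < ρ ∧ ∃ rp : ℝ, 0 < rp ∧
      ∀ (X : Type*) [MetricSpace X] [MeasurableSpace X] [BorelSpace X]
        (μ ν : Measure X) (A : Set X),
        IsRegularOn μ s (Set.univ : Set X) aX bX rX →
        IsRegularOn ν t A aA bA rA → ν Aᶜ = 0 →
        ∀ x ∈ A, ∀ r : ℝ, 0 < r → r < rp →
          ∃ (y : X) (ρ' : ℝ), ρ < ρ' ∧ closedBall y (ρ' * r) ⊆ closedBall x r \ A := by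
  obtain ⟨ε, ⟨hε, hε_le⟩, hε_small⟩ :=
    exists_mem_Ioc_mul_rpow_lt (4 ^ (s + t) * (bX * bA)) (sub_pos.2 hts) (mul_pos haX haA)
      one_half_pos
  refine ⟨ε / 2, half_pos hε, min rX (rA / 2), lt_min hrX (half_pos hrA), ?_⟩
  intro X _ _ _ μ ν A hμ hν _ x hx r hr hrp
  have hrX' : r < rX := hrp.trans_le (min_le_left _ _)
  have hrA' : 2 * r < rA := by linarith [hrp.trans_le (min_le_right _ _)]
  let u : ℝ≥0 := ⟨ε * r, by positivity⟩
  by_cases hcover : IsCover u (closedBall x (r / 2)) A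
  · have h := hμ.mul_rpow_le_of_isCover hν haX.le (haX.le.trans habX) haA (haA.le.trans habA)
      hx (u := u) (mul_pos hε hr) (show 2 * (ε * r) ≤ r by nlinarith) hrX' hrA' hcover
    exact absurd (mul_le_four_rpow_mul_rpow_sub_of_le hε hr h) hε_small.not_ge
  · obtain ⟨y, hy, hyA⟩ := not_subset.1 (mt isCover_iff_subset_iUnion_closedBall.2 hcover)
    have hδ : ε * r + dist y x ≤ r := by nlinarith [mem_closedBall.1 hy]
    exact ⟨y, ε, half_lt_self hε, closedBall_subset_closedBall_diff_of_notMem hδ hyA⟩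

/-- In an `s`-regular metric space, every `t`-regular set with `0 < t < s` is
uniformly `ρ`-porous for some `ρ > 0`, where the porosity constant `ρ` and the
porosity scale `rp` depend only on `s`, `t` and the regularity constants of the
space and of the set. -/
theorem regular_set_is_porous (s t : ℝ) (hs : 0 < s) (ht : 0 < t) (hts : t < s)
    (aX bX rX aA bA rA : ℝ) (haX : 0 < aX) (habX : aX ≤ bX) (hrX : 0 < rX)
    (haA : 0 < aA) (habA : aA ≤ bA) (hrA : 0 < rA) :
    ∃ ρ : ℝ, 0 < ρ ∧ ∃ rp : ℝ, 0 < rp ∧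
      ∀ (X : Type*) [MetricSpace X] [MeasurableSpace X] [BorelSpace X]
        (μ ν : Measure X) (A : Set X),
        IsRegularOn μ s (Set.univ : Set X) aX bX rX →
        IsRegularOn ν t A aA bA rA → ν Aᶜ = 0 →
        ∀ x ∈ A, ∀ r : ℝ, 0 < r → r < rp →
          ∃ (y : X) (ρ' : ℝ), ρ < ρ' ∧ closedBall y (ρ' * r) ⊆ closedBall x r \ A :=
  regular_set_is_porous_general s t hts aX bX rX aA bA rA haX habX hrX haA habA hrA
end

section
/- Let (X,d) be a complete separable metric space and let μ be a doubling measure on X with doubling constant c_μ and scale r_μ. If A ⊆ X is uniformly ρ-porous for some 0 < ρ ≤ 1/3, then there exist constants C = C(c_μ, ρ) > 0 and δ = C(c_μ)·ρ^{log₂ c_μ}/log(1/ρ) > 0 such that for every x₀ ∈ X and every 0 < r < r₀ ≤ r_μ one has μ( (A ∩ B(x₀,r₀))(r) ) ≤ C · μ(B(x₀,r₀)) · (r/r₀)^δ, where (A ∩ B(x₀,r₀))(r) denotes the open r-neighborhood of A ∩ B(x₀,r₀). -/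
open Metric MeasureTheory Set

/-- `A` is uniformly `ρ`-porous. -/
def UniformlyPorous {X : Type*} [MetricSpace X] (A : Set X) (ρ : ℝ) : Prop :=
  ∃ rp : ℝ, 0 < rp ∧ ∀ x ∈ A, ∀ r : ℝ, 0 < r → r < rp →
    ∃ (y : X) (ρ' : ℝ), ρ < ρ' ∧ closedBall y (ρ' * r) ⊆ closedBall x r \ A

/-! Porosity puts, inside every ball `B(a, s)` centred on `A` (with `s` below the porosity scale), a
ball `B(y, ρ s)` disjoint from `A`; its concentric half `B(y, ρ s / 2)` misses the
`ρ s / 2`-neighbourhood of `A`, and by doubling it carries at least a fraction `c⁻ᵐ` of the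
measure of `B(a, 4 s)`, where `2ᵐ ≥ 10 / ρ`. Covering the `ρ s / 2`-neighbourhood of `A` by such
balls `B(a, 4 s)` with disjoint cores (Vitali), the holes show that shrinking a neighbourhood of `A`
by the factor `ρ / 4` multiplies its local measure by at most `κ = cᵐ / (cᵐ + 1) < 1`. Iterating
from scale `≈ r₀` down to `r` takes `N ≈ log (r₀ / r) / log (4 / ρ)` steps, and
`κ ^ N ≈ (r / r₀) ^ δ` with `δ = log κ / log (ρ / 4)`. -/

open scoped ENNReal

def DoublingUpTo {X : Type*} [MetricSpace X] [MeasurableSpace X] (μ : Measure X) (K : ℝ≥0∞)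
    (R : ℝ) : Prop :=
  ∀ (x : X) (r : ℝ), 0 < r → r < R → μ (closedBall x (2 * r)) ≤ K * μ (closedBall x r)

namespace DoublingUpTo

variable {X : Type*} [MetricSpace X] [MeasurableSpace X] {μ : Measure X} {K : ℝ≥0∞} {R : ℝ}

theorem measure_closedBall_two_pow_mul_le (h : DoublingUpTo μ K R) (x : X) {u : ℝ} (hu : 0 < u) :
    ∀ k : ℕ, 2 ^ k * u < 2 * R → μ (closedBall x (2 ^ k * u)) ≤ K ^ k * μ (closedBall x u)
  | 0, _ => by simp
  | k + 1, hk => by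
    have hk' : 2 ^ k * u < R := by rw [pow_succ] at hk; linarith
    have hk0 : 0 < 2 ^ k * u := by positivity
    calc μ (closedBall x (2 ^ (k + 1) * u)) = μ (closedBall x (2 * (2 ^ k * u))) := by ring_nf
      _ ≤ K * μ (closedBall x (2 ^ k * u)) := h x _ (by positivity) hk'
      _ ≤ K * (K ^ k * μ (closedBall x u)) := by
        gcongr; exact measure_closedBall_two_pow_mul_le h x hu k (by linarith)
      _ = K ^ (k + 1) * μ (closedBall x u) := by ring

theorem measure_closedBall_le_pow_mul (h : DoublingUpTo μ K R) (m : ℕ) {a y : X} {r ε : ℝ}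
    (hr : 0 < r) (hR : r + dist a y < 2 * R) (hε : r + dist a y ≤ 2 ^ m * ε) :
    μ (closedBall a r) ≤ K ^ m * μ (closedBall y ε) := by
  set u := (r + dist a y) / 2 ^ m
  have hu : 2 ^ m * u = r + dist a y := by simp only [u]; field_simp
  calc μ (closedBall a r) ≤ μ (closedBall y (2 ^ m * u)) :=
        measure_mono (closedBall_subset_closedBall' (by rw [hu]))
    _ ≤ K ^ m * μ (closedBall y u) :=
        h.measure_closedBall_two_pow_mul_le y (by positivity) m (by rwa [hu])
    _ ≤ K ^ m * μ (closedBall y ε) := by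
        gcongr; exact (div_le_iff₀' (by positivity)).2 hε

end DoublingUpTo

theorem ENNReal.le_div_add_one_mul {a b d K : ℝ≥0∞} (hK : K ≠ ⊤) (hab : a ≤ K * b)
    (habd : a + b ≤ d) : a ≤ K / (K + 1) * d := by
  rw [← ENNReal.mul_div_right_comm, ENNReal.le_div_iff_mul_le (by simp) (by simp [hK])]
  calc a * (K + 1) = K * a + a := by ring
    _ ≤ K * a + K * b := by gcongr
    _ = K * (a + b) := by ring
    _ ≤ K * d := by gcongr

theorem measure_le_div_add_one_mul_of_covering {α ι : Type*} [MeasurableSpace α]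
    {μ : Measure α} {s : Set ι} (hs : s.Countable) {G G' : Set α} {B H : ι → Set α}
    {K : ℝ≥0∞} (hK : K ≠ ⊤) (hGB : G ⊆ ⋃ i ∈ s, B i) (hBH : ∀ i ∈ s, μ (B i) ≤ K * μ (H i))
    (hH : s.PairwiseDisjoint H) (hHm : ∀ i ∈ s, MeasurableSet (H i))
    (hHG : ∀ i ∈ s, Disjoint (H i) G) (hHG' : ∀ i ∈ s, H i ⊆ G') (hGG' : G ⊆ G') :
    μ G ≤ K / (K + 1) * μ G' := by
  refine ENNReal.le_div_add_one_mul hK ?_ ?_ (b := μ (⋃ i ∈ s, H i))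
  · calc μ G ≤ ∑' i : s, μ (B i) := (measure_mono hGB).trans (measure_biUnion_le μ hs _)
      _ ≤ ∑' i : s, K * μ (H i) := ENNReal.tsum_le_tsum fun i => hBH i i.2
      _ = K * μ (⋃ i ∈ s, H i) := by rw [ENNReal.tsum_mul_left, measure_biUnion hs hH hHm]
  · rw [← measure_union (disjoint_iUnion₂_right.2 fun i hi => (hHG i hi).symm)
      (MeasurableSet.biUnion hs hHm)]
    exact measure_mono (union_subset hGG' (iUnion₂_subset hHG'))

theorem exists_countable_pairwiseDisjoint_closedBall_cover {X : Type*} [MetricSpace X]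
    [TopologicalSpace.SeparableSpace X] (t : Set X) {s : ℝ} (hs : 0 < s) :
    ∃ u ⊆ t, u.Countable ∧ (u.PairwiseDisjoint fun a => closedBall a s) ∧
      ∀ a ∈ t, ∃ b ∈ u, closedBall a s ⊆ closedBall b (4 * s) := by
  obtain ⟨u, hut, hdisj, hcov⟩ := Vitali.exists_disjoint_subfamily_covering_enlargement_closedBall
    t id (fun _ => s) s (fun _ _ => le_rfl) 4 (by norm_num)
  exact ⟨u, hut, hdisj.countable_of_nonempty_interior fun a _ =>
    ⟨a, ball_subset_interior_closedBall (mem_ball_self hs)⟩, hdisj, hcov⟩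

def PorousUpTo {X : Type*} [MetricSpace X] (A : Set X) (ρ R : ℝ) : Prop :=
  ∀ x ∈ A, ∀ r : ℝ, 0 < r → r < R →
    ∃ (y : X) (ρ' : ℝ), ρ < ρ' ∧ closedBall y (ρ' * r) ⊆ closedBall x r \ A

theorem PorousUpTo.measure_thickening_inter_closedBall_le {X : Type*} [MetricSpace X]
    [TopologicalSpace.SeparableSpace X] [MeasurableSpace X] [BorelSpace X] {μ : Measure X}
    {K : ℝ≥0∞} {A : Set X} {ρ rp rμ : ℝ} (hA : PorousUpTo A ρ rp) (hρ : 0 < ρ) (hρ1 : ρ ≤ 1)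
    (hμ : DoublingUpTo μ K rμ) (hK : K ≠ ⊤) {m : ℕ} (hm : 10 ≤ ρ * 2 ^ m) (x : X) {σ R : ℝ}
    (hσ : 0 < σ) (hσp : σ < 2 * rp) (hσμ : 5 * σ < 4 * rμ) :
    μ (thickening (ρ / 4 * σ) A ∩ closedBall x R) ≤
      K ^ m / (K ^ m + 1) * μ (thickening σ A ∩ closedBall x (R + σ)) := by
  set s := σ / 2 with hs_def
  have hs : 0 < s := by positivity
  have hρs : ρ / 4 * σ ≤ s := by nlinarith
  have hole : ∀ a ∈ A, ∃ y, closedBall y (ρ * s) ⊆ closedBall a s \ A := fun a ha => by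
    obtain ⟨y, ρ', hρ', hsub⟩ := hA a ha s hs (by linarith)
    exact ⟨y, (closedBall_subset_closedBall (by nlinarith)).trans hsub⟩
  choose! y hy using hole
  have hHa : ∀ a ∈ A, closedBall (y a) (ρ / 4 * σ) ⊆ closedBall a s := fun a ha =>
    (closedBall_subset_closedBall (by nlinarith)).trans ((hy a ha).trans sdiff_subset)
  obtain ⟨u, hut, hu, hdisj, hcov⟩ :=
    exists_countable_pairwiseDisjoint_closedBall_cover (A ∩ closedBall x (R + s)) hs
  refine measure_le_div_add_one_mul_of_covering hu (B := fun a => closedBall a (4 * s))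
    (H := fun a => closedBall (y a) (ρ / 4 * σ)) (by finiteness) ?_ (fun a ha => ?_)
    (hdisj.mono_on fun a ha => hHa a (hut ha).1) (fun _ _ => measurableSet_closedBall)
    (fun a ha => ?_) (fun a ha w hw => ?_) (inter_subset_inter (thickening_mono (by nlinarith) A)
      (closedBall_subset_closedBall (by linarith)))
  · rintro z ⟨hzA, hzx⟩
    obtain ⟨a, ha, hza⟩ := mem_thickening_iff.1 hzA
    have hax : dist a x ≤ R + s := by
      linarith [dist_triangle_left a x z, dist_comm z a, mem_closedBall.1 hzx]
    obtain ⟨b, hb, hab⟩ := hcov a ⟨ha, hax⟩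
    exact mem_biUnion hb (hab (mem_closedBall.2 (by linarith)))
  · have hya : dist a (y a) ≤ s := by
      rw [dist_comm]; exact (hy a (hut ha).1 (mem_closedBall_self (by positivity))).1
    exact hμ.measure_closedBall_le_pow_mul m (by positivity) (by linarith) (by nlinarith)
  · refine disjoint_left.2 fun w hw hwG => ?_
    obtain ⟨a', ha', hwa'⟩ := mem_thickening_iff.1 hwG.1
    have : dist a' (y a) ≤ ρ * s := by
      have : ρ * s = 2 * (ρ / 4 * σ) := by rw [hs_def]; ring
      linarith [dist_triangle a' w (y a), dist_comm a' w, mem_closedBall.1 hw]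
    exact (hy a (hut ha).1 (mem_closedBall.2 this)).2 ha'
  · have hwa := mem_closedBall.1 (hHa a (hut ha).1 hw)
    refine ⟨mem_thickening_iff.2 ⟨a, (hut ha).1, by linarith⟩, mem_closedBall.2 ?_⟩
    linarith [dist_triangle w a x, mem_closedBall.1 (hut ha).2]

theorem le_pow_mul_of_forall_le_mul {F : ℝ → ℝ → ℝ≥0∞} {l t : ℝ} {κ : ℝ≥0∞} (hl0 : 0 < l)
    (hl1 : l ≤ 1) (ht : 0 < t) (hF : ∀ σ, 0 < σ → σ ≤ t → ∀ R, F (l * σ) R ≤ κ * F σ (R + σ)) :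
    ∀ (N : ℕ) (R : ℝ), F (l ^ N * t) R ≤ κ ^ N * F t (R + t * ∑ k ∈ Finset.range N, l ^ k)
  | 0, R => by simp
  | N + 1, R => by
    have hlN : l ^ N * t ≤ t := mul_le_of_le_one_left ht.le (pow_le_one₀ hl0.le hl1)
    calc F (l ^ (N + 1) * t) R = F (l * (l ^ N * t)) R := by ring_nf
      _ ≤ κ * F (l ^ N * t) (R + l ^ N * t) := hF _ (by positivity) hlN R
      _ ≤ κ * (κ ^ N * F t (R + l ^ N * t + t * ∑ k ∈ Finset.range N, l ^ k)) := by
        gcongr; exact le_pow_mul_of_forall_le_mul hl0 hl1 ht hF N _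
      _ = κ ^ (N + 1) * F t (R + t * ∑ k ∈ Finset.range (N + 1), l ^ k) := by
        rw [Finset.sum_range_succ]; ring_nf

theorem exists_pow_lt_and_measure_thickening_inter_closedBall_le {X : Type*} [MetricSpace X]
    [MeasurableSpace X] {μ : Measure X} {K κ : ℝ≥0∞} {A : Set X} {l t rμ : ℝ}
    (hμ : DoublingUpTo μ K rμ) (hl0 : 0 < l) (hl : l ≤ 1 / 2) (ht : 0 < t) (x₀ : X)
    (hdecay : ∀ σ, 0 < σ → σ ≤ t → ∀ R, μ (thickening (l * σ) A ∩ closedBall x₀ R) ≤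
      κ * μ (thickening σ A ∩ closedBall x₀ (R + σ)))
    {r r₀ : ℝ} (hr : 0 < r) (hrr₀ : r < r₀) (htr₀ : 3 * t < r₀) (hr₀ : r₀ ≤ rμ) :
    ∃ N : ℕ, l ^ (N + 1) * t < r ∧
      μ (thickening r (A ∩ closedBall x₀ r₀)) ≤ κ ^ N * K * μ (closedBall x₀ r₀) := by
  have hball : ∀ V, 0 < V → V < 2 * r₀ → μ (closedBall x₀ V) ≤ K * μ (closedBall x₀ r₀) :=
    fun V hV hVr₀ => by
      simpa only [pow_one] using hμ.measure_closedBall_le_pow_mul 1 hV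
        (by rw [dist_self]; linarith) (by rw [dist_self, pow_one]; linarith)
  have hsub : ∀ {s}, r ≤ s →
      thickening r (A ∩ closedBall x₀ r₀) ⊆ thickening s A ∩ closedBall x₀ (r₀ + r) := by
    intro s hrs z hz
    obtain ⟨a, ⟨ha, hax⟩, hza⟩ := mem_thickening_iff.1 hz
    exact ⟨mem_thickening_iff.2 ⟨a, ha, hza.trans_le hrs⟩,
      mem_closedBall.2 (by linarith [dist_triangle z a x₀, mem_closedBall.1 hax])⟩
  by_cases hrt : r ≤ t
  · obtain ⟨N, hNr, hrN⟩ := exists_nat_pow_near_of_lt_one (div_pos hr ht)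
      ((div_le_one ht).2 hrt) hl0 (by linarith)
    have hsum0 : 0 ≤ ∑ k ∈ Finset.range N, l ^ k := Finset.sum_nonneg fun k _ => by positivity
    have hsum : ∑ k ∈ Finset.range N, l ^ k ≤ 2 := by
      have := geom_sum_Ico_le_of_lt_one (m := 0) (n := N) hl0.le (by linarith)
      rw [← Finset.range_eq_Ico, pow_zero] at this
      exact this.trans ((div_le_iff₀ (by linarith)).2 (by linarith))
    refine ⟨N, (lt_div_iff₀ ht).1 hNr, ?_⟩
    calc μ (thickening r (A ∩ closedBall x₀ r₀))
        ≤ μ (thickening (l ^ N * t) A ∩ closedBall x₀ (r₀ + r)) :=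
          measure_mono (hsub ((div_le_iff₀ ht).1 hrN))
      _ ≤ κ ^ N * μ (thickening t A ∩
            closedBall x₀ (r₀ + r + t * ∑ k ∈ Finset.range N, l ^ k)) :=
          le_pow_mul_of_forall_le_mul (F := fun σ R => μ (thickening σ A ∩ closedBall x₀ R))
            hl0 (by linarith) ht hdecay N _
      _ ≤ κ ^ N * (K * μ (closedBall x₀ r₀)) := by
        gcongr
        exact (measure_mono inter_subset_right).trans (hball _ (by nlinarith) (by nlinarith))
      _ = κ ^ N * K * μ (closedBall x₀ r₀) := by ring
  · refine ⟨0, by rw [zero_add, pow_one]; nlinarith, ?_⟩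
    calc μ (thickening r (A ∩ closedBall x₀ r₀))
        ≤ μ (closedBall x₀ (r₀ + r)) := measure_mono ((hsub le_rfl).trans inter_subset_right)
      _ ≤ κ ^ 0 * K * μ (closedBall x₀ r₀) := by
        simpa using hball _ (by linarith) (by linarith)

theorem pow_le_rpow_logb {κ l x : ℝ} (hκ : 0 < κ) (hl0 : 0 < l) (hl1 : l < 1) {N : ℕ}
    (hN : l ^ N ≤ x) (hκ1 : κ ≤ 1) : κ ^ N ≤ x ^ Real.logb l κ := by
  calc κ ^ N = (l ^ Real.logb l κ) ^ N := by rw [Real.rpow_logb hl0 hl1.ne hκ]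
    _ = (l ^ N) ^ Real.logb l κ := Real.rpow_pow_comm hl0.le _ _
    _ ≤ x ^ Real.logb l κ :=
      Real.rpow_le_rpow (by positivity) hN (Real.logb_nonneg_of_base_lt_one hl0 hl1 hκ hκ1)

theorem PorousUpTo.exists_measure_thickening_inter_closedBall_le_rpow {X : Type*}
    [MetricSpace X] [TopologicalSpace.SeparableSpace X] [MeasurableSpace X] [BorelSpace X]
    {μ : Measure X} {A : Set X} {c rμ ρ rp : ℝ} (hμ : DoublingUpTo μ (ENNReal.ofReal c) rμ)
    (hc : 0 < c) (hA : PorousUpTo A ρ rp) (hrp : 0 < rp) (hρ : 0 < ρ) (hρ1 : ρ ≤ 1) :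
    ∃ C : ℝ, 0 < C ∧ ∃ δ : ℝ, 0 < δ ∧ ∀ (x₀ : X) (r r₀ : ℝ), 0 < r → r < r₀ → r₀ ≤ rμ →
      μ (thickening r (A ∩ closedBall x₀ r₀)) ≤
        ENNReal.ofReal (C * (r / r₀) ^ δ) * μ (closedBall x₀ r₀) := by
  obtain ⟨m, hm⟩ := pow_unbounded_of_one_lt (10 / ρ) one_lt_two
  rw [div_lt_iff₀' hρ] at hm
  set κ := c ^ m / (c ^ m + 1)
  have hκ0 : 0 < κ := by positivity
  have hκ1 : κ < 1 := (div_lt_one (by positivity)).2 (lt_add_one _)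
  have hκ : ENNReal.ofReal c ^ m / (ENNReal.ofReal c ^ m + 1) = ENNReal.ofReal κ := by
    rw [ENNReal.ofReal_div_of_pos (by positivity), ENNReal.ofReal_add (by positivity) zero_le_one,
      ENNReal.ofReal_pow hc.le, ENNReal.ofReal_one]
  set l := ρ / 4 with hl
  have hl0 : 0 < l := by positivity
  have hl1 : l < 1 := by linarith
  set q := max 1 (rμ / rp)
  set M := 4 * q / l
  refine ⟨c * M ^ Real.logb l κ, by positivity, Real.logb l κ,
    Real.logb_pos_of_base_lt_one hl0 hl1 hκ0 hκ1, fun x₀ r r₀ hr hrr₀ hr₀ => ?_⟩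
  set t := min r₀ rp / 4
  have hr₀0 : 0 < r₀ := hr.trans hrr₀
  have ht : 0 < t := by have := lt_min hr₀0 hrp; positivity
  have htp : t ≤ rp / 4 := by have := min_le_right r₀ rp; simp only [t]; linarith
  have htr₀ : t ≤ r₀ / 4 := by have := min_le_left r₀ rp; simp only [t]; linarith
  have hr₀q : r₀ ≤ 4 * q * t := by
    rcases le_total r₀ rp with h | h
    · simp only [t, min_eq_left h]; nlinarith [le_max_left 1 (rμ / rp)]
    · simp only [t, min_eq_right h]
      nlinarith [(div_le_iff₀ hrp).1 (le_max_right 1 (rμ / rp))]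
  obtain ⟨N, hNr, hN⟩ := exists_pow_lt_and_measure_thickening_inter_closedBall_le (t := t) hμ
    hl0 (by linarith) ht x₀ (fun σ hσ hσt R =>
      hA.measure_thickening_inter_closedBall_le hρ hρ1 hμ ENNReal.ofReal_ne_top hm.le x₀ hσ
        (by linarith) (by linarith)) hr hrr₀ (by linarith) hr₀
  have hlN : l ^ N ≤ M * (r / r₀) := by
    rw [show M * (r / r₀) = 4 * q * r / (l * r₀) by simp only [M]; field_simp]
    rw [le_div_iff₀ (by positivity)]
    rw [pow_succ] at hNr
    nlinarith [mul_le_mul_of_nonneg_left hr₀q (mul_pos (pow_pos hl0 N) hl0).le,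
      le_max_left 1 (rμ / rp)]
  calc μ (thickening r (A ∩ closedBall x₀ r₀))
      ≤ ENNReal.ofReal (κ ^ N * c) * μ (closedBall x₀ r₀) := by
        rwa [ENNReal.ofReal_mul (by positivity), ENNReal.ofReal_pow hκ0.le, ← hκ]
    _ ≤ ENNReal.ofReal (c * M ^ Real.logb l κ * (r / r₀) ^ Real.logb l κ) *
        μ (closedBall x₀ r₀) := by
      refine mul_le_mul_left (ENNReal.ofReal_le_ofReal ?_) _
      calc κ ^ N * c ≤ (M * (r / r₀)) ^ Real.logb l κ * c := by
            gcongr; exact pow_le_rpow_logb hκ0 hl0 hl1 hlN hκ1.le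
        _ = c * M ^ Real.logb l κ * (r / r₀) ^ Real.logb l κ := by
            rw [Real.mul_rpow (by simp only [M, q]; positivity) (by positivity)]; ring

theorem porous_neighborhood_measure_doubling_general {X : Type*} [MetricSpace X]
    [TopologicalSpace.SeparableSpace X] [MeasurableSpace X] [BorelSpace X]
    (μ : Measure X) (c rμ : ℝ) (hc : 1 ≤ c)
    (hdoub : ∀ (x : X) (r : ℝ), 0 < r → r < rμ →
      0 < μ (closedBall x (2 * r)) ∧
      μ (closedBall x (2 * r)) ≤ ENNReal.ofReal c * μ (closedBall x r) ∧
      μ (closedBall x r) < ⊤)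
    (A : Set X) (ρ : ℝ) (hρ : 0 < ρ) (hρ3 : ρ ≤ 1 / 3) (hA : UniformlyPorous A ρ) :
    ∃ C : ℝ, 0 < C ∧ ∃ D : ℝ, 0 < D ∧
      ∀ (x₀ : X) (r r₀ : ℝ), 0 < r → r < r₀ → r₀ ≤ rμ →
        μ (thickening r (A ∩ closedBall x₀ r₀)) ≤
          ENNReal.ofReal (C * (r / r₀) ^ (D * ρ ^ Real.logb 2 c / Real.log (1 / ρ))) *
            μ (closedBall x₀ r₀) := by
  obtain ⟨rp, hrp, hpor⟩ := hA
  obtain ⟨C, hC, δ, hδ, hbound⟩ := PorousUpTo.exists_measure_thickening_inter_closedBall_le_rpow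
    (fun x r hr hrμ => (hdoub x r hr hrμ).2.1) (by linarith) hpor hrp hρ (by linarith)
  have hlog : 0 < Real.log (1 / ρ) := Real.log_pos ((one_lt_div hρ).2 (by linarith))
  refine ⟨C, hC, δ * Real.log (1 / ρ) / ρ ^ Real.logb 2 c, by positivity, ?_⟩
  have hexp :
      δ * Real.log (1 / ρ) / ρ ^ Real.logb 2 c * ρ ^ Real.logb 2 c / Real.log (1 / ρ) = δ := by
    field_simp
  simpa only [hexp] using hbound

/-- If `μ` is a doubling measure (with doubling constant `c` and scale `rμ`) on a
complete separable metric space and `A` is uniformly `ρ`-porous with `0 < ρ ≤ 1/3`,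
then the measure of the open `r`-neighborhood of `A ∩ B(x₀,r₀)` is at most
`C · μ(B(x₀,r₀)) · (r/r₀)^δ` with `δ = D·ρ^(log₂ c)/log(1/ρ)`. -/
theorem porous_neighborhood_measure_doubling {X : Type*} [MetricSpace X] [CompleteSpace X]
    [TopologicalSpace.SeparableSpace X] [MeasurableSpace X] [BorelSpace X]
    (μ : Measure X) (c rμ : ℝ) (hc : 1 ≤ c) (hrμ : 0 < rμ)
    (hdoub : ∀ (x : X) (r : ℝ), 0 < r → r < rμ →
      0 < μ (closedBall x (2 * r)) ∧
      μ (closedBall x (2 * r)) ≤ ENNReal.ofReal c * μ (closedBall x r) ∧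
      μ (closedBall x r) < ⊤)
    (A : Set X) (ρ : ℝ) (hρ : 0 < ρ) (hρ3 : ρ ≤ 1 / 3) (hA : UniformlyPorous A ρ) :
    ∃ C : ℝ, 0 < C ∧ ∃ D : ℝ, 0 < D ∧
      ∀ (x₀ : X) (r r₀ : ℝ), 0 < r → r < r₀ → r₀ ≤ rμ →
        μ (thickening r (A ∩ closedBall x₀ r₀)) ≤
          ENNReal.ofReal (C * (r / r₀) ^ (D * ρ ^ Real.logb 2 c / Real.log (1 / ρ))) *
            μ (closedBall x₀ r₀) :=
  porous_neighborhood_measure_doubling_general μ c rμ hc hdoub A ρ hρ hρ3 hA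
end

section
/- Let (X,d) be a complete separable metric space, let μ be a doubling measure on X with doubling constant c_μ and scale r_μ, and let A ⊆ X be uniformly ρ-porous with 0 < ρ ≤ 1/3 and porosity scale r_p. Set γ = c_μ^{⌊log₂(ρ/6)⌋}. Then for every r₀ with 0 < r₀ ≤ min(r_μ, r_p) and every k ∈ ℕ one has μ( A(r₀·ρ^{3k}, r₀·ρ^{3(k-1)}) ) ≥ γ · μ( A(r₀·ρ^{3k}) ), where A(t₁,t₂) = {x ∈ X : t₁ < dist(x,A) ≤ t₂} and A(r) = {x ∈ X : dist(x,A) < r}. -/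
open Metric MeasureTheory Set

/-!
Put `S = r₀ ρ^(3(k-1))` and cover `A` by a maximal `S`-separated net `N ⊆ A` (countable, since `X`
is separable). By porosity, next to each `b ∈ N` there is a hole
`closedBall y t ⊆ closedBall b (S / 2) \ A` of radius `t ≍ ρ S`, and it lies in the annulus
`A(ρ³S, S)`. The holes of distinct net points are disjoint, while the balls `ball b (S + ρ³S)`
cover the thickening `A(ρ³S)` and lie in `closedBall y (2ⁿ t)` with `2ⁿ ≥ 6 / ρ`. So `n`
applications of the doubling inequality give `μ(A(ρ³S)) ≤ c ^ n μ(A(ρ³S, S))`, and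
`n = -⌊log₂(ρ/6)⌋` makes `c ^ n = γ⁻¹`.
-/

theorem one_le_two_pow_mul_of_floor_logb_eq_neg {x : ℝ} {n : ℕ} (hx : 0 < x)
    (hn : ⌊Real.logb 2 x⌋ = -n) : 1 ≤ 2 ^ n * x := by
  have h := Int.zpow_log_le_self (R := ℝ) (b := 2) one_lt_two hx
  rw [← Real.floor_logb_natCast hx.le, Nat.cast_ofNat, hn, zpow_neg, zpow_natCast] at h
  exact (inv_le_iff_one_le_mul₀' (by positivity)).1 h

section

variable {X : Type*}

theorem Metric.exists_maximal_isSeparated [PseudoEMetricSpace X] (ε : ENNReal) (s : Set X) :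
    ∃ N, Maximal (fun M ↦ M ⊆ s ∧ IsSeparated ε M) N :=
  zorn_subset _ fun c hcs hc ↦
    ⟨⋃₀ c, ⟨sUnion_subset fun _ hN ↦ (hcs hN).1, hc.pairwise_sUnion.2 fun _ hN ↦ (hcs hN).2⟩,
      fun _ ↦ subset_sUnion_of_mem⟩

theorem measure_le_mul_of_subset_biUnion_of_pairwiseDisjoint [MeasurableSpace X] {μ : Measure X}
    {ι : Type*} {N : Set ι} {E T : Set X} {U V : ι → Set X} {K : ENNReal} (hN : N.Countable)
    (hE : E ⊆ ⋃ i ∈ N, U i) (hV : N.PairwiseDisjoint V) (hVm : ∀ i ∈ N, MeasurableSet (V i))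
    (hVT : ∀ i ∈ N, V i ⊆ T) (hUV : ∀ i ∈ N, μ (U i) ≤ K * μ (V i)) :
    μ E ≤ K * μ T :=
  calc μ E ≤ μ (⋃ i ∈ N, U i) := measure_mono hE
    _ ≤ ∑' i : N, μ (U i) := measure_biUnion_le μ hN _
    _ ≤ ∑' i : N, K * μ (V i) := ENNReal.tsum_le_tsum fun i ↦ hUV i i.2
    _ = K * μ (⋃ i ∈ N, V i) := by rw [ENNReal.tsum_mul_left, measure_biUnion hN hV hVm]
    _ ≤ K * μ T := by
        gcongr
        exact iUnion₂_subset hVT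

variable [PseudoMetricSpace X]

def IsDoublingUpTo [MeasurableSpace X] (μ : Measure X) (C : ENNReal) (R : ℝ) : Prop :=
  ∀ (x : X) (r : ℝ), 0 < r → r < R → μ (closedBall x (2 * r)) ≤ C * μ (closedBall x r)

def IsUniformlyPorous (ρ rp : ℝ) (A : Set X) : Prop :=
  ∀ x ∈ A, ∀ r : ℝ, 0 < r → r < rp →
    ∃ (y : X) (ρ' : ℝ), ρ < ρ' ∧ closedBall y (ρ' * r) ⊆ closedBall x r \ A

def infEDistAnnulus (A : Set X) (t₁ t₂ : ℝ) : Set X :=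
  {x | ENNReal.ofReal t₁ < infEDist x A ∧ infEDist x A ≤ ENNReal.ofReal t₂}

theorem Metric.exists_countable_separated_net [TopologicalSpace.SeparableSpace X]
    (s : Set X) {ε : ℝ} (hε : 0 < ε) :
    ∃ N ⊆ s, N.Countable ∧ N.Pairwise (fun a b ↦ ε < dist a b) ∧
      s ⊆ ⋃ b ∈ N, closedBall b ε := by
  obtain ⟨N, hN⟩ := exists_maximal_isSeparated (ENNReal.ofReal ε) s
  have hsep : N.Pairwise (fun a b ↦ ε < dist a b) := fun a ha b hb hab ↦ by
    have h : ENNReal.ofReal ε < edist a b := hN.prop.2 ha hb hab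
    rw [edist_dist, ENNReal.ofReal_lt_ofReal_iff'] at h
    exact h.1
  have hcover := IsCover.of_maximal_isSeparated (ε := ε.toNNReal) hN
  rw [isCover_iff_subset_iUnion_closedBall, Real.coe_toNNReal _ hε.le] at hcover
  refine ⟨N, hN.prop.1, ?_, hsep, hcover⟩
  refine PairwiseDisjoint.countable_of_isOpen (s := fun b ↦ ball b (ε / 2)) ?_
    (fun _ _ ↦ isOpen_ball) (fun b _ ↦ ⟨b, mem_ball_self (half_pos hε)⟩)
  exact fun a ha b hb hab ↦ ball_disjoint_ball (by linarith [hsep ha hb hab])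

theorem IsDoublingUpTo.measure_closedBall_le_pow_mul [MeasurableSpace X]
    {μ : Measure X} {C : ENNReal} {R : ℝ} (hμ : IsDoublingUpTo μ C R) (x : X) {t : ℝ} :
    ∀ {n : ℕ} {r : ℝ}, 0 < r → r ≤ 2 ^ n * t → r < 2 * R →
      μ (closedBall x r) ≤ C ^ n * μ (closedBall x t)
  | 0, r, _, hrt, _ => by
      simpa using measure_mono (closedBall_subset_closedBall (by simpa using hrt))
  | n + 1, r, hr, hrt, hrR => calc
      μ (closedBall x r) = μ (closedBall x (2 * (r / 2))) := by rw [mul_div_cancel₀ _ two_ne_zero]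
      _ ≤ C * μ (closedBall x (r / 2)) := hμ x _ (half_pos hr) (by linarith)
      _ ≤ C * (C ^ n * μ (closedBall x t)) := by
          gcongr
          exact hμ.measure_closedBall_le_pow_mul x (half_pos hr)
            (by rw [pow_succ] at hrt; linarith) (by linarith)
      _ = C ^ (n + 1) * μ (closedBall x t) := by rw [pow_succ', mul_assoc]

theorem closedBall_subset_infEDistAnnulus {A : Set X} {a y : X}
    {R r t s S : ℝ} (ha : a ∈ A) (hsub : closedBall y R ⊆ closedBall a r \ A) (hR : 0 ≤ R)
    (hs : 0 ≤ s) (hst : s < R - t) (hS : r + t ≤ S) :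
    closedBall y t ⊆ infEDistAnnulus A s S := by
  intro x hx
  rw [mem_closedBall] at hx
  have hya : dist y a ≤ r := (hsub (mem_closedBall_self hR)).1
  constructor
  · refine ((ENNReal.ofReal_lt_ofReal_iff_of_nonneg hs).2 hst).trans_le
      (le_infEDist.2 fun b hb ↦ ?_)
    have hbR : R < dist b y := not_le.1 fun h ↦ (hsub (mem_closedBall.2 h)).2 hb
    rw [edist_dist]
    exact ENNReal.ofReal_le_ofReal (by linarith [dist_triangle b x y, dist_comm x b])
  · calc infEDist x A ≤ edist x a := infEDist_le_edist_of_mem ha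
      _ ≤ ENNReal.ofReal S := by
          rw [edist_dist]
          exact ENNReal.ofReal_le_ofReal (by linarith [dist_triangle x y a])

theorem IsUniformlyPorous.measure_thickening_le_pow_mul_measure_infEDistAnnulus
    [TopologicalSpace.SeparableSpace X] [MeasurableSpace X] [OpensMeasurableSpace X]
    {μ : Measure X} {C : ENNReal} {R ρ rp S : ℝ} {A : Set X} {n : ℕ}
    (hA : IsUniformlyPorous ρ rp A) (hμ : IsDoublingUpTo μ C R) (hρ : 0 < ρ) (hρ3 : ρ ≤ 1 / 3)
    (hS : 0 < S) (hSR : S ≤ R) (hSp : S < 2 * rp) (hn : 6 ≤ 2 ^ n * ρ) :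
    μ (thickening (ρ ^ 3 * S) A) ≤ C ^ n * μ (infEDistAnnulus A (ρ ^ 3 * S) S) := by
  -- Porosity at scale `r` gives holes of radius `t`; since `ρ < ρ'`, they stay at distance `> s`
  -- from `A`.
  set r := S / 2 with hr_def
  set s := ρ ^ 3 * S with hs_def
  set t := ρ * r - s with ht_def
  have hr : 0 < r := half_pos hS
  have hs : 0 < s := by positivity
  have hρ2 : ρ ^ 2 ≤ 1 / 9 := by nlinarith
  have ht_eq : t = ρ * (S * (1 / 2 - ρ ^ 2)) := by rw [ht_def, hr_def, hs_def]; ring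
  have hrt : 3 * r + s ≤ 2 ^ n * t := calc
    3 * r + s ≤ 6 * (S * (1 / 2 - ρ ^ 2)) := by
      nlinarith [mul_le_mul_of_nonneg_left hρ2 hS.le, mul_le_mul_of_nonneg_left hρ3 hS.le]
    _ ≤ 2 ^ n * ρ * (S * (1 / 2 - ρ ^ 2)) :=
      mul_le_mul_of_nonneg_right hn (mul_nonneg hS.le (by linarith))
    _ = 2 ^ n * t := by rw [ht_eq]; ring
  choose! y ρ' hρ' hhole using fun a ha ↦ hA a ha r hr (by linarith)
  have hy : ∀ a ∈ A, dist (y a) a ≤ r := fun a ha ↦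
    (hhole a ha (mem_closedBall_self (by nlinarith [hρ' a ha]))).1
  have hhole_ball : ∀ a ∈ A, closedBall (y a) t ⊆ closedBall a r := fun a ha ↦
    (closedBall_subset_closedBall (by nlinarith [hρ' a ha])).trans
      ((hhole a ha).trans sdiff_subset)
  have hhole_annulus : ∀ a ∈ A, closedBall (y a) t ⊆ infEDistAnnulus A s S := fun a ha ↦
    closedBall_subset_infEDistAnnulus ha (hhole a ha) (by nlinarith [hρ' a ha]) hs.le
      (by nlinarith [hρ' a ha]) (by nlinarith)
  obtain ⟨N, hNA, hNc, hNsep, hNcover⟩ :=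
    exists_countable_separated_net A (by positivity : 0 < 2 * r)
  have hthick : thickening s A ⊆ ⋃ b ∈ N, ball b (2 * r + s) := fun x hx ↦ by
    obtain ⟨a, ha, hxa⟩ := mem_thickening_iff.1 hx
    obtain ⟨b, hb, hab⟩ := mem_iUnion₂.1 (hNcover ha)
    exact mem_iUnion₂.2
      ⟨b, hb, mem_ball.2 (by linarith [dist_triangle x a b, mem_closedBall.1 hab])⟩
  have hdisj : N.PairwiseDisjoint fun b ↦ closedBall (y b) t :=
    fun b₁ hb₁ b₂ hb₂ hne ↦ disjoint_left.2 fun w hw₁ hw₂ ↦ (hNsep hb₁ hb₂ hne).not_ge <| by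
      linarith [dist_triangle_left b₁ b₂ w, mem_closedBall.1 (hhole_ball b₁ (hNA hb₁) hw₁),
        mem_closedBall.1 (hhole_ball b₂ (hNA hb₂) hw₂)]
  have hball : ∀ b ∈ N, μ (ball b (2 * r + s)) ≤ C ^ n * μ (closedBall (y b) t) := fun b hb ↦
    calc μ (ball b (2 * r + s)) ≤ μ (closedBall (y b) (3 * r + s)) := by
          refine measure_mono fun w hw ↦ mem_closedBall.2 ?_
          linarith [dist_triangle w b (y b), mem_ball.1 hw, dist_comm b (y b), hy b (hNA hb)]
      _ ≤ C ^ n * μ (closedBall (y b) t) :=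
          hμ.measure_closedBall_le_pow_mul _ (by positivity) hrt
            (by nlinarith [mul_le_mul_of_nonneg_left hρ2 hS.le])
  exact measure_le_mul_of_subset_biUnion_of_pairwiseDisjoint hNc hthick hdisj
    (fun _ _ ↦ measurableSet_closedBall) (fun b hb ↦ hhole_annulus b (hNA hb)) hball

end

theorem annulus_measure_lower_bound_general {X : Type*} [MetricSpace X]
    [TopologicalSpace.SeparableSpace X] [MeasurableSpace X] [BorelSpace X]
    (μ : Measure X) (c rμ : ℝ) (hc : 1 ≤ c)
    (hdoub : ∀ (x : X) (r : ℝ), 0 < r → r < rμ →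
      0 < μ (closedBall x (2 * r)) ∧
      μ (closedBall x (2 * r)) ≤ ENNReal.ofReal c * μ (closedBall x r) ∧
      μ (closedBall x r) < ⊤)
    (A : Set X) (ρ rp : ℝ) (hρ : 0 < ρ) (hρ3 : ρ ≤ 1 / 3)
    (hpor : ∀ x ∈ A, ∀ r : ℝ, 0 < r → r < rp →
      ∃ (y : X) (ρ' : ℝ), ρ < ρ' ∧ closedBall y (ρ' * r) ⊆ closedBall x r \ A)
    (r₀ : ℝ) (hr₀ : 0 < r₀) (hr₀le : r₀ ≤ min rμ rp) (k : ℕ) (hk : 1 ≤ k) :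
    ENNReal.ofReal (c ^ (⌊Real.logb 2 (ρ / 6)⌋ : ℤ)) * μ (thickening (r₀ * ρ ^ (3 * k)) A) ≤
      μ {x : X | ENNReal.ofReal (r₀ * ρ ^ (3 * k)) < EMetric.infEdist x A ∧
          EMetric.infEdist x A ≤ ENNReal.ofReal (r₀ * ρ ^ (3 * (k - 1)))} := by
  obtain ⟨n, hn⟩ := Int.exists_eq_neg_ofNat (a := ⌊Real.logb 2 (ρ / 6)⌋) <|
    Int.floor_nonpos (Real.logb_nonpos one_lt_two (by positivity) (by linarith))
  set S := r₀ * ρ ^ (3 * (k - 1))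
  have hS : 0 < S := by positivity
  have hSr₀ : S ≤ r₀ := mul_le_of_le_one_right hr₀.le (pow_le_one₀ hρ.le (by linarith))
  have hs : r₀ * ρ ^ (3 * k) = ρ ^ 3 * S := by
    obtain ⟨k, rfl⟩ := Nat.exists_eq_add_of_le' hk
    simp only [Nat.add_sub_cancel, S, mul_add, pow_add]
    ring
  have hmain := IsUniformlyPorous.measure_thickening_le_pow_mul_measure_infEDistAnnulus hpor
    (fun x r hr hrμ ↦ (hdoub x r hr hrμ).2.1) hρ hρ3 hS (hSr₀.trans (le_min_iff.1 hr₀le).1)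
    (by linarith [(le_min_iff.1 hr₀le).2])
    (by linarith [one_le_two_pow_mul_of_floor_logb_eq_neg (by positivity : 0 < ρ / 6) hn])
  have hγ : ENNReal.ofReal (c ^ (-n : ℤ)) * ENNReal.ofReal c ^ n = 1 := by
    rw [← ENNReal.ofReal_pow (by linarith), ← ENNReal.ofReal_mul (by positivity), zpow_neg,
      zpow_natCast, inv_mul_cancel₀ (by positivity), ENNReal.ofReal_one]
  rw [hs, hn]
  calc _ ≤ ENNReal.ofReal (c ^ (-n : ℤ)) * (ENNReal.ofReal c ^ n *
          μ (infEDistAnnulus A (ρ ^ 3 * S) S)) := by gcongr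
    _ = μ (infEDistAnnulus A (ρ ^ 3 * S) S) := by rw [← mul_assoc, hγ, one_mul]

/-- For a doubling measure `μ` (constant `c`, scale `rμ`) and a uniformly `ρ`-porous
set `A` (porosity scale `rp`) with `0 < ρ ≤ 1/3`, setting `γ = c^⌊log₂(ρ/6)⌋`, one has
`μ(A(r₀·ρ^(3k), r₀·ρ^(3(k-1)))) ≥ γ · μ(A(r₀·ρ^(3k)))` for every `0 < r₀ ≤ min(rμ, rp)`
and every `k ≥ 1`, where `A(t₁,t₂) = {x : t₁ < dist(x,A) ≤ t₂}` and
`A(r)` is the open `r`-neighborhood of `A`. -/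
theorem annulus_measure_lower_bound {X : Type*} [MetricSpace X] [CompleteSpace X]
    [TopologicalSpace.SeparableSpace X] [MeasurableSpace X] [BorelSpace X]
    (μ : Measure X) (c rμ : ℝ) (hc : 1 ≤ c) (hrμ : 0 < rμ)
    (hdoub : ∀ (x : X) (r : ℝ), 0 < r → r < rμ →
      0 < μ (closedBall x (2 * r)) ∧
      μ (closedBall x (2 * r)) ≤ ENNReal.ofReal c * μ (closedBall x r) ∧
      μ (closedBall x r) < ⊤)
    (A : Set X) (ρ rp : ℝ) (hρ : 0 < ρ) (hρ3 : ρ ≤ 1 / 3) (hrp : 0 < rp)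
    (hpor : ∀ x ∈ A, ∀ r : ℝ, 0 < r → r < rp →
      ∃ (y : X) (ρ' : ℝ), ρ < ρ' ∧ closedBall y (ρ' * r) ⊆ closedBall x r \ A)
    (r₀ : ℝ) (hr₀ : 0 < r₀) (hr₀le : r₀ ≤ min rμ rp) (k : ℕ) (hk : 1 ≤ k) :
    ENNReal.ofReal (c ^ (⌊Real.logb 2 (ρ / 6)⌋ : ℤ)) * μ (thickening (r₀ * ρ ^ (3 * k)) A) ≤
      μ {x : X | ENNReal.ofReal (r₀ * ρ ^ (3 * k)) < EMetric.infEdist x A ∧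
          EMetric.infEdist x A ≤ ENNReal.ofReal (r₀ * ρ ^ (3 * (k - 1)))} :=
  annulus_measure_lower_bound_general μ c rμ hc hdoub A ρ rp hρ hρ3 hpor r₀ hr₀ hr₀le k hk
end

section
/- Let (α_k)_{k≥1} be a sequence of nonnegative real numbers with Σ_{i=1}^∞ α_i < ∞, and let γ > 0 be such that α_k ≥ γ · Σ_{i=k+1}^∞ α_i for every k ≥ 1. Then for every k ≥ 1 one has α_1 ≥ γ·(γ+1)^{k-1} · Σ_{i=k+1}^∞ α_i, and consequently α_k ≤ γ^{-1}·(γ+1)^{2-k}·α_1 for every k ≥ 1. -/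
/-!
Write `T n = ∑_{i > n} a i` for the tail sums. Since `T n = a (n + 1) + T (n + 1)` and
`a (n + 1) ≥ γ · T (n + 1)`, every tail is at most `(γ + 1)⁻¹` times the previous one, so
`(γ + 1)^n · T (n + 1) ≤ T 1 ≤ γ⁻¹ · a 1`, which is the first bound. For the second, `a (n + 1)`
is a term of `T n ≤ (γ + 1)^(-n) · T 0`, and `T 0 = a 1 + T 1 ≤ (1 + γ⁻¹) · a 1`.
-/

section Tail

variable {G : Type*} [AddCommGroup G] [TopologicalSpace G] [IsTopologicalAddGroup G]

theorem Summable.tsum_nat_add_succ_eq_add [T2Space G] {f : ℕ → G} (hf : Summable f) (n : ℕ) :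
    ∑' i, f (i + n + 1) = f (n + 1) + ∑' i, f (i + (n + 1) + 1) := by
  have hg : Summable fun i => f (i + n + 1) := (summable_nat_add_iff (n + 1)).2 hf
  rw [hg.tsum_eq_zero_add]
  simp only [zero_add, add_right_comm _ 1 n, ← add_assoc]

theorem Summable.le_tsum_nat_add_succ [PartialOrder G] [IsOrderedAddMonoid G]
    [OrderClosedTopology G] {f : ℕ → G} (hf : Summable f) (hf₀ : ∀ n, 0 ≤ f n) (n : ℕ) :
    f (n + 1) ≤ ∑' i, f (i + n + 1) := by
  have hg : Summable fun i => f (i + n + 1) := (summable_nat_add_iff (n + 1)).2 hf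
  simpa only [zero_add] using hg.le_tsum 0 fun i _ => hf₀ _

end Tail

theorem pow_mul_le_of_mul_succ_le {R : Type*} [Semiring R] [PartialOrder R] [IsOrderedRing R]
    {c : R} (hc : 0 ≤ c) {T : ℕ → R} (hT : ∀ n, c * T (n + 1) ≤ T n) (n : ℕ) :
    c ^ n * T n ≤ T 0 := by
  have hanti : Antitone fun n => c ^ n * T n := antitone_nat_of_succ_le fun n => by
    rw [pow_succ, mul_assoc]
    exact mul_le_mul_of_nonneg_left (hT n) (pow_nonneg hc n)
  simpa using hanti n.zero_le

/-- If `(a k)_{k ≥ 1}` is a summable sequence of nonnegative reals satisfying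
`a k ≥ γ · Σ_{i ≥ k+1} a i` for all `k ≥ 1`, then
`a 1 ≥ γ·(γ+1)^(k-1) · Σ_{i ≥ k+1} a i` and `a k ≤ γ⁻¹·(γ+1)^(2-k)·a 1` for all `k ≥ 1`. -/
theorem tail_sum_growth (a : ℕ → ℝ) (ha : ∀ n, 0 ≤ a n) (hsum : Summable a)
    (γ : ℝ) (hγ : 0 < γ) (h : ∀ k : ℕ, 1 ≤ k → γ * ∑' i : ℕ, a (i + k + 1) ≤ a k) :
    (∀ k : ℕ, 1 ≤ k → γ * (γ + 1) ^ ((k : ℤ) - 1) * ∑' i : ℕ, a (i + k + 1) ≤ a 1) ∧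
    (∀ k : ℕ, 1 ≤ k → a k ≤ γ⁻¹ * (γ + 1) ^ (2 - (k : ℤ)) * a 1) := by
  set T : ℕ → ℝ := fun n => ∑' i, a (i + n + 1)
  have hc : 0 < γ + 1 := by linarith
  have hstep (n : ℕ) : (γ + 1) * T (n + 1) ≤ T n := by
    have := h (n + 1) le_add_self
    simp only [T, hsum.tsum_nat_add_succ_eq_add n] at this ⊢
    linarith
  have hT1 : γ * T 1 ≤ a 1 := h 1 le_rfl
  have hT0 : T 0 ≤ γ⁻¹ * (γ + 1) * a 1 := by
    have hT1' : T 1 ≤ γ⁻¹ * a 1 := (le_inv_mul_iff₀ hγ).2 hT1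
    have hsplit : T 0 = a 1 + T 1 := hsum.tsum_nat_add_succ_eq_add 0
    rw [hsplit, mul_add_one, inv_mul_cancel₀ hγ.ne', add_mul, one_mul]
    linarith
  refine ⟨fun k hk => ?_, fun k hk => ?_⟩ <;> obtain ⟨n, rfl⟩ := Nat.exists_eq_add_of_le' hk
  · rw [show ((n + 1 : ℕ) : ℤ) - 1 = n by push_cast; ring, zpow_natCast, mul_assoc]
    calc γ * ((γ + 1) ^ n * T (n + 1)) ≤ γ * T 1 := by
          gcongr
          exact pow_mul_le_of_mul_succ_le (T := fun n => T (n + 1)) hc.le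
            (fun n => hstep (n + 1)) n
      _ ≤ a 1 := hT1
  · have hdecay : T n ≤ ((γ + 1) ^ n)⁻¹ * T 0 :=
      (le_inv_mul_iff₀ (by positivity)).2 (pow_mul_le_of_mul_succ_le hc.le hstep n)
    calc a (n + 1) ≤ T n := hsum.le_tsum_nat_add_succ ha n
      _ ≤ ((γ + 1) ^ n)⁻¹ * (γ⁻¹ * (γ + 1) * a 1) := hdecay.trans (by gcongr)
      _ = γ⁻¹ * (γ + 1) ^ (2 - ((n + 1 : ℕ) : ℤ)) * a 1 := by
          rw [show 2 - ((n + 1 : ℕ) : ℤ) = 1 - n by push_cast; ring, zpow_sub₀ hc.ne', zpow_one,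
            zpow_natCast]
          ring
end
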